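/- arXiv:math/0409025 — 4 statements merged into one kernel-verified Lean document; each statement's English description precedes it below -/
import Mathlib

section
/- The number of noncrossing partitions of {1,...,n} is the Catalan number C_n = (1/(n+1))·binom(2n, n). -/
/-!
Work with equivalence relations instead of partitions. In a noncrossing relation on
`{0, …, n}` let `g + 1` be the next element of the block of `0` (`g = n` if `{0}` is a block).
An arc from `0` to `g + 1` cannot be crossed, so `1, …, g` are related to nothing outside
`{1, …, g}`: the relation is a noncrossing relation on these `g` points together with one on
the `n - g` points `g + 1, …, n`, to whose first block `0` is attached. Conversely every such
pair glues back, which is the Catalan recursion `C (n + 1) = ∑ g, C g * C (n - g)`.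
-/

open Finset

/-- Two elements lie in the same block of the partition `P`. -/
def SameBlock {n : ℕ} (P : Finpartition (univ : Finset (Fin n))) (i j : Fin n) : Prop :=
  ∃ t ∈ P.parts, i ∈ t ∧ j ∈ t

/-- A partition of `{1,…,n}` is noncrossing if there are no `i < j < k < l` with
`i ∼ k`, `j ∼ l` and `i ≁ j`. -/
def IsNoncrossing {n : ℕ} (P : Finpartition (univ : Finset (Fin n))) : Prop :=
  ¬ ∃ i j k l : Fin n, i < j ∧ j < k ∧ k < l ∧
      SameBlock P i k ∧ SameBlock P j l ∧ ¬ SameBlock P i j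

namespace Setoid

variable {α β : Type*}

def IsNoncrossing [LT α] (s : Setoid α) : Prop :=
  ∀ ⦃i j k l : α⦄, i < j → j < k → k < l → s i k → s j l → s i j

theorem IsNoncrossing.comap [Preorder α] [PartialOrder β] {t : Setoid β}
    (ht : t.IsNoncrossing) {f : α → β} (hf : Monotone f) : (t.comap f).IsNoncrossing := by
  intro i j k l hij hjk hkl hik hjl
  rw [comap_rel] at *
  rcases (hf hij.le).lt_or_eq with hij' | hij'
  · rcases (hf hjk.le).lt_or_eq with hjk' | hjk'
    · rcases (hf hkl.le).lt_or_eq with hkl' | hkl'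
      · exact ht hij' hjk' hkl' hik hjl
      · exact t.trans hik (t.symm (hkl' ▸ hjl))
    · exact hjk' ▸ hik
  · exact hij' ▸ t.refl _

theorem IsNoncrossing.of_restrict [LinearOrder α] {s : Setoid α} {R : Set α}
    (hR : R.OrdConnected) (hsat : ∀ ⦃x y⦄, s x y → (x ∈ R ↔ y ∈ R))
    (hin : (s.comap ((↑) : R → α)).IsNoncrossing)
    (hout : (s.comap ((↑) : ↥Rᶜ → α)).IsNoncrossing) : s.IsNoncrossing := by
  intro i j k l hij hjk hkl hik hjl
  by_cases hi : i ∈ R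
  · have hk : k ∈ R := (hsat hik).1 hi
    have hj : j ∈ R := hR.out hi hk ⟨hij.le, hjk.le⟩
    have hl : l ∈ R := (hsat hjl).1 hj
    exact hin (i := ⟨i, hi⟩) (j := ⟨j, hj⟩) (k := ⟨k, hk⟩) (l := ⟨l, hl⟩) hij hjk hkl hik hjl
  · have hk : k ∉ R := fun hk ↦ hi ((hsat hik).2 hk)
    have hj : j ∉ R := fun hj ↦ hk (hR.out hj ((hsat hjl).1 hj) ⟨hjk.le, hkl.le⟩)
    have hl : l ∉ R := fun hl ↦ hj ((hsat hjl).2 hl)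
    exact hout (i := ⟨i, hi⟩) (j := ⟨j, hj⟩) (k := ⟨k, hk⟩) (l := ⟨l, hl⟩) hij hjk hkl hik hjl

protected def sum (s : Setoid α) (t : Setoid β) : Setoid (α ⊕ β) where
  r := Sum.LiftRel s t
  iseqv := by
    refine ⟨fun x ↦ ?_, fun h ↦ ?_, fun h₁ h₂ ↦ ?_⟩
    · cases x
      exacts [.inl (s.refl _), .inr (t.refl _)]
    · cases h
      exacts [.inl (s.symm ‹_›), .inr (t.symm ‹_›)]
    · cases h₁ <;> cases h₂
      exacts [.inl (s.trans ‹_› ‹_›), .inr (t.trans ‹_› ‹_›)]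

instance [Finite α] : Finite (Setoid α) :=
  Finite.of_injective _ fun _ _ ↦ eq_iff_rel_eq.2

section NatExtend

variable {m : ℕ}

-- On `ℕ` the index shifts below need no bound proofs.
def natExtend (s : Setoid (Fin m)) : Setoid ℕ where
  r a b := a = b ∨ ∃ (ha : a < m) (hb : b < m), s ⟨a, ha⟩ ⟨b, hb⟩
  iseqv := by
    refine ⟨fun a ↦ .inl rfl, fun h ↦ ?_, fun h₁ h₂ ↦ ?_⟩
    · obtain rfl | ⟨ha, hb, h⟩ := h
      exacts [.inl rfl, .inr ⟨hb, ha, s.symm h⟩]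
    · obtain rfl | ⟨ha, hb, h₁⟩ := h₁
      · exact h₂
      obtain rfl | ⟨_, hc, h₂⟩ := h₂
      · exact .inr ⟨ha, hb, h₁⟩
      · exact .inr ⟨ha, hc, s.trans h₁ h₂⟩

theorem natExtend_iff_of_lt (s : Setoid (Fin m)) {a b : ℕ} (ha : a < m) (hb : b < m) :
    s.natExtend a b ↔ s ⟨a, ha⟩ ⟨b, hb⟩ :=
  ⟨fun h ↦ h.elim (fun hab ↦ by subst hab; exact s.refl _) fun ⟨_, _, h⟩ ↦ h,
    fun h ↦ .inr ⟨ha, hb, h⟩⟩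

@[simp]
theorem natExtend_val (s : Setoid (Fin m)) (i j : Fin m) : s.natExtend i j ↔ s i j :=
  natExtend_iff_of_lt s i.2 j.2

theorem natExtend_comap_iff (t : Setoid ℕ) (f : ℕ → ℕ) {a b : ℕ} (ha : a < m) (hb : b < m) :
    (t.comap fun x : Fin m ↦ f x).natExtend a b ↔ t (f a) (f b) :=
  natExtend_iff_of_lt _ ha hb

theorem natExtend_lt_of_ne (s : Setoid (Fin m)) {a b : ℕ} (h : s.natExtend a b) (hab : a ≠ b) :
    b < m :=
  h.elim (absurd · hab) fun ⟨_, hb, _⟩ ↦ hb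

theorem IsNoncrossing.natExtend {s : Setoid (Fin m)} (hs : s.IsNoncrossing) :
    s.natExtend.IsNoncrossing := by
  intro i j k l hij hjk hkl hik hjl
  have hk := s.natExtend_lt_of_ne hik (by omega)
  have hl := s.natExtend_lt_of_ne hjl (by omega)
  rw [natExtend_iff_of_lt s (by omega) hk] at hik
  rw [natExtend_iff_of_lt s (by omega) hl] at hjl
  rw [natExtend_iff_of_lt s (by omega) (by omega)]
  exact hs (i := ⟨i, _⟩) (j := ⟨j, _⟩) (k := ⟨k, _⟩) (l := ⟨l, _⟩) hij hjk hkl hik hjl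

end NatExtend

section Glue

variable {g i j : ℕ} {A B : Setoid ℕ}

/-- `1, …, g` go to the left as `0, …, g - 1`; `0, g + 1, g + 2, …` go to the right as
`0, 0, 1, …` (truncated subtraction), which puts `0` into the block of `g + 1`. -/
def gapSplit (g i : ℕ) : ℕ ⊕ ℕ :=
  if i ∈ Set.Ioc 0 g then .inl (i - 1) else .inr (i - (g + 1))

def glue (g : ℕ) (A B : Setoid ℕ) : Setoid ℕ :=
  (A.sum B).comap (gapSplit g)

theorem glue_iff_of_mem (hi : i ∈ Set.Ioc 0 g) (hj : j ∈ Set.Ioc 0 g) :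
    glue g A B i j ↔ A (i - 1) (j - 1) := by
  rw [glue, comap_rel, gapSplit, gapSplit, if_pos hi, if_pos hj]
  exact Sum.liftRel_inl_inl

theorem glue_iff_of_notMem (hi : i ∉ Set.Ioc 0 g) (hj : j ∉ Set.Ioc 0 g) :
    glue g A B i j ↔ B (i - (g + 1)) (j - (g + 1)) := by
  rw [glue, comap_rel, gapSplit, gapSplit, if_neg hi, if_neg hj]
  exact Sum.liftRel_inr_inr

theorem mem_Ioc_iff_of_glue (h : glue g A B i j) : i ∈ Set.Ioc 0 g ↔ j ∈ Set.Ioc 0 g := by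
  rw [glue, comap_rel, gapSplit, gapSplit] at h
  split_ifs at h with hi hj hj
  · exact iff_of_true hi hj
  · exact (Sum.not_liftRel_inl_inr h).elim
  · exact (Sum.not_liftRel_inr_inl h).elim
  · exact iff_of_false hi hj

theorem IsNoncrossing.glue (hA : A.IsNoncrossing) (hB : B.IsNoncrossing) :
    (glue g A B).IsNoncrossing := by
  refine .of_restrict Set.ordConnected_Ioc (fun _ _ ↦ mem_Ioc_iff_of_glue) ?_ ?_
  · have : (Setoid.glue g A B).comap ((↑) : Set.Ioc 0 g → ℕ) =
        A.comap fun i : Set.Ioc 0 g ↦ (i : ℕ) - 1 :=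
      Setoid.ext fun i j ↦ glue_iff_of_mem i.2 j.2
    exact this ▸ hA.comap fun i j h ↦ Nat.sub_le_sub_right h 1
  · have : (Setoid.glue g A B).comap ((↑) : ↥(Set.Ioc 0 g)ᶜ → ℕ) =
        B.comap fun i : ↥(Set.Ioc 0 g)ᶜ ↦ (i : ℕ) - (g + 1) :=
      Setoid.ext fun i j ↦ glue_iff_of_notMem i.2 j.2
    exact this ▸ hB.comap fun i j h ↦ Nat.sub_le_sub_right h (g + 1)

end Glue

variable {n g : ℕ} {s : Setoid (Fin (n + 1))}

section FirstGap

open scoped Classical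

/-- `g + 1` is the next element of the block of `0`, and `g = n` if `{0}` is a block. -/
noncomputable def firstGap (s : Setoid (Fin (n + 1))) : Fin (n + 1) :=
  ⟨Nat.find (⟨n, .inr rfl⟩ : ∃ g, s.natExtend 0 (g + 1) ∨ g = n),
    Nat.lt_succ_of_le (Nat.find_min' _ (.inr rfl))⟩

theorem natExtend_zero_firstGap_succ (h : (s.firstGap : ℕ) < n) :
    s.natExtend 0 (s.firstGap + 1) :=
  (Nat.find_spec (⟨n, .inr rfl⟩ : ∃ g, s.natExtend 0 (g + 1) ∨ g = n)).resolve_right h.ne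

theorem not_natExtend_zero_of_le_firstGap {i : ℕ} (h0 : 0 < i) (hi : i ≤ s.firstGap) :
    ¬ s.natExtend 0 i := fun h ↦
  Nat.find_min (⟨n, .inr rfl⟩ : ∃ g, s.natExtend 0 (g + 1) ∨ g = n) (m := i - 1)
    (by simp only [firstGap] at hi; omega) (.inl (by rwa [Nat.sub_add_cancel h0]))

theorem val_firstGap_eq (hg : s.natExtend 0 (g + 1) ∨ g = n)
    (hmin : ∀ i, 0 < i → i ≤ g → ¬ s.natExtend 0 i) : (s.firstGap : ℕ) = g := by
  have hle : (s.firstGap : ℕ) ≤ g :=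
    Nat.find_min' (⟨n, .inr rfl⟩ : ∃ g, s.natExtend 0 (g + 1) ∨ g = n) hg
  refine le_antisymm hle (not_lt.1 fun hlt ↦ ?_)
  have hgn : g ≤ n := hg.elim (fun h ↦ Nat.le_of_lt_succ (by
    have := s.natExtend_lt_of_ne h (by omega); omega)) le_of_eq
  exact hmin _ (Nat.succ_pos _) hlt (natExtend_zero_firstGap_succ (by omega))

-- Otherwise the arc from `i` to `j` would cross the arc from `0` to `firstGap + 1`.
theorem IsNoncrossing.not_natExtend_of_mem_Ioc_firstGap (hs : s.IsNoncrossing) {i j : ℕ}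
    (hi : i ∈ Set.Ioc 0 (s.firstGap : ℕ)) (hj : j ∉ Set.Ioc 0 (s.firstGap : ℕ)) :
    ¬ s.natExtend i j := by
  intro hij
  have h0i := not_natExtend_zero_of_le_firstGap hi.1 hi.2
  rcases Nat.eq_zero_or_pos j with rfl | hj0
  · exact h0i (s.natExtend.symm hij)
  have hgj : (s.firstGap : ℕ) < j := by
    simp only [Set.mem_Ioc, not_and, not_le] at hj
    exact hj hj0
  have hjn := s.natExtend_lt_of_ne hij (by have := hi.2; omega)
  have h0g := natExtend_zero_firstGap_succ (s := s) (by omega)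
  rcases (Nat.succ_le_of_lt hgj).eq_or_lt with rfl | hj'
  · exact h0i (s.natExtend.trans h0g (s.natExtend.symm hij))
  · exact h0i (hs.natExtend hi.1 (Nat.lt_succ_of_le hi.2) hj' h0g hij)

end FirstGap

section Decomposition

def gapInner (s : Setoid (Fin (n + 1))) (g : ℕ) : Setoid (Fin g) :=
  s.natExtend.comap fun a : Fin g ↦ (a : ℕ) + 1

def gapOuter (s : Setoid (Fin (n + 1))) (g : ℕ) : Setoid (Fin (n - g)) :=
  s.natExtend.comap fun a : Fin (n - g) ↦ (a : ℕ) + g + 1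

def gapGlue (g : ℕ) (s₁ : Setoid (Fin g)) (s₂ : Setoid (Fin (n - g))) :
    Setoid (Fin (n + 1)) :=
  (glue g s₁.natExtend s₂.natExtend).comap Fin.val

theorem IsNoncrossing.gapInner (hs : s.IsNoncrossing) : (s.gapInner g).IsNoncrossing :=
  hs.natExtend.comap fun _ _ h ↦ Nat.add_le_add_right h 1

theorem IsNoncrossing.gapOuter (hs : s.IsNoncrossing) : (s.gapOuter g).IsNoncrossing :=
  hs.natExtend.comap fun _ _ h ↦ Nat.add_le_add_right (Nat.add_le_add_right h g) 1

variable {s₁ : Setoid (Fin g)} {s₂ : Setoid (Fin (n - g))}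

theorem IsNoncrossing.gapGlue (h₁ : s₁.IsNoncrossing) (h₂ : s₂.IsNoncrossing) :
    (gapGlue g s₁ s₂).IsNoncrossing :=
  (h₁.natExtend.glue h₂.natExtend).comap Fin.val_strictMono.monotone

theorem natExtend_gapGlue_iff {a b : ℕ} (ha : a < n + 1) (hb : b < n + 1) :
    (gapGlue g s₁ s₂).natExtend a b ↔ glue g s₁.natExtend s₂.natExtend a b :=
  natExtend_comap_iff _ id ha hb

theorem val_firstGap_gapGlue (hg : g ≤ n) : ((gapGlue g s₁ s₂).firstGap : ℕ) = g := by
  refine val_firstGap_eq ?_ fun i hi0 hig h ↦ ?_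
  · rcases hg.lt_or_eq with hg | rfl
    · refine .inl ((natExtend_gapGlue_iff (by omega) (by omega)).2 ?_)
      rw [glue_iff_of_notMem (by simp) (by simp), Nat.zero_sub, Nat.sub_self]
    · exact .inr rfl
  · rw [natExtend_gapGlue_iff (by omega) (by omega)] at h
    exact (mem_Ioc_iff_of_glue h).not.1 (by simp) ⟨hi0, hig⟩

theorem gapInner_gapGlue (hg : g ≤ n) : (gapGlue g s₁ s₂).gapInner g = s₁ := by
  ext a b
  rw [gapInner, comap_rel, natExtend_gapGlue_iff (by omega) (by omega),
    glue_iff_of_mem (by simp) (by simp)]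
  simp

theorem gapOuter_gapGlue : (gapGlue g s₁ s₂).gapOuter g = s₂ := by
  ext a b
  rw [gapOuter, comap_rel, natExtend_gapGlue_iff (by omega) (by omega),
    glue_iff_of_notMem (by simp) (by simp)]
  simp

theorem IsNoncrossing.gapGlue_gapInner_gapOuter (hs : s.IsNoncrossing) :
    Setoid.gapGlue s.firstGap (s.gapInner s.firstGap) (s.gapOuter s.firstGap) = s := by
  set g : ℕ := (s.firstGap : ℕ)
  ext i j
  rw [← natExtend_val, natExtend_gapGlue_iff i.2 j.2, ← natExtend_val s]
  by_cases hi : (i : ℕ) ∈ Set.Ioc 0 g <;> by_cases hj : (j : ℕ) ∈ Set.Ioc 0 g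
  · rw [glue_iff_of_mem hi hj, Setoid.gapInner,
      natExtend_comap_iff _ (· + 1) (m := g) (a := (i : ℕ) - 1) (b := (j : ℕ) - 1)
        (Nat.sub_one_lt_of_le hi.1 hi.2) (Nat.sub_one_lt_of_le hj.1 hj.2),
      Nat.sub_add_cancel hi.1, Nat.sub_add_cancel hj.1]
  · exact iff_of_false (fun h ↦ hj ((mem_Ioc_iff_of_glue h).1 hi))
      (hs.not_natExtend_of_mem_Ioc_firstGap hi hj)
  · exact iff_of_false (fun h ↦ hi ((mem_Ioc_iff_of_glue h).2 hj))
      fun h ↦ hs.not_natExtend_of_mem_Ioc_firstGap hj hi (s.natExtend.symm h)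
  have hzero_or_gt : ∀ x : Fin (n + 1), (x : ℕ) ∉ Set.Ioc 0 g → (x : ℕ) = 0 ∨ g < x := by
    intro x hx
    simp only [Set.mem_Ioc, not_and, not_le] at hx
    omega
  rw [glue_iff_of_notMem hi hj]
  rcases (show g ≤ n from Fin.is_le _).lt_or_eq with hgn | hgn
  · have hrep : ∀ x : Fin (n + 1), (x : ℕ) ∉ Set.Ioc 0 g →
        s.natExtend x (x - (g + 1) + g + 1) := by
      intro x hx
      rcases hzero_or_gt x hx with h0 | hgx
      · rw [h0, Nat.zero_sub, Nat.zero_add]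
        exact natExtend_zero_firstGap_succ hgn
      · rw [show (x : ℕ) - (g + 1) + g + 1 = x by omega]
    have ri := hrep i hi
    have rj := hrep j hj
    rw [Setoid.gapOuter, natExtend_comap_iff _ (· + g + 1) (m := n - g)
      (a := (i : ℕ) - (g + 1)) (b := (j : ℕ) - (g + 1)) (by omega) (by omega)]
    exact ⟨fun h ↦ s.natExtend.trans ri (s.natExtend.trans h (s.natExtend.symm rj)),
      fun h ↦ s.natExtend.trans (s.natExtend.symm ri) (s.natExtend.trans h rj)⟩
  · have hi0 : (i : ℕ) = 0 := (hzero_or_gt i hi).resolve_right (by omega)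
    have hj0 : (j : ℕ) = 0 := (hzero_or_gt j hj).resolve_right (by omega)
    rw [hi0, hj0]
    exact iff_of_true (Setoid.refl' _ _) (Setoid.refl' _ _)

end Decomposition

noncomputable def firstGapFiberEquiv (g : Fin (n + 1)) :
    {s : {s : Setoid (Fin (n + 1)) // s.IsNoncrossing} // s.1.firstGap = g} ≃
      {t : Setoid (Fin g) // t.IsNoncrossing} × {t : Setoid (Fin (n - g)) // t.IsNoncrossing} where
  toFun s := (⟨s.1.1.gapInner g, s.1.2.gapInner⟩, ⟨s.1.1.gapOuter g, s.1.2.gapOuter⟩)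
  invFun t :=
    ⟨⟨gapGlue g t.1.1 t.2.1, t.1.2.gapGlue t.2.2⟩, Fin.ext (val_firstGap_gapGlue g.is_le)⟩
  left_inv := by
    rintro ⟨⟨s, hs⟩, rfl⟩
    exact Subtype.ext (Subtype.ext hs.gapGlue_gapInner_gapOuter)
  right_inv t :=
    Prod.ext (Subtype.ext (gapInner_gapGlue g.is_le)) (Subtype.ext gapOuter_gapGlue)

theorem card_isNoncrossing (m : ℕ) :
    Nat.card {s : Setoid (Fin m) // s.IsNoncrossing} = catalan m := by
  induction m using Nat.strong_induction_on with | _ m ih =>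
  cases m with
  | zero =>
    have : Subsingleton (Setoid (Fin 0)) := ⟨fun _ _ ↦ Setoid.ext fun i ↦ i.elim0⟩
    have : Nonempty {s : Setoid (Fin 0) // s.IsNoncrossing} := ⟨⟨⊥, fun i ↦ i.elim0⟩⟩
    rw [Nat.card_unique, catalan_zero]
  | succ n =>
    rw [← Nat.card_congr (Equiv.sigmaFiberEquiv
        fun s : {s : Setoid (Fin (n + 1)) // s.IsNoncrossing} ↦ s.1.firstGap),
      Nat.card_sigma, catalan_succ]
    refine Fintype.sum_congr _ _ fun g ↦ ?_
    rw [Nat.card_congr (firstGapFiberEquiv g), Nat.card_prod, ih g (by omega),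
      ih (n - g) (by omega)]

end Setoid

namespace Finpartition

variable {α : Type*} [DecidableEq α]

theorem image_part {s : Finset α} (P : Finpartition s) : s.image P.part = P.parts := by
  ext t
  rw [mem_image]
  constructor
  · rintro ⟨a, ha, rfl⟩
    exact P.part_mem.2 ha
  · exact fun ht ↦ P.part_surjOn ht

theorem part_injective {s : Finset α} :
    Function.Injective (part : Finpartition s → α → Finset α) :=
  fun P Q h ↦ Finpartition.ext (by rw [← P.image_part, ← Q.image_part, h])

open scoped Classical in
noncomputable def equivSetoid [Fintype α] : Finpartition (univ : Finset α) ≃ Setoid α where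
  toFun P := Setoid.ker P.part
  invFun r := ofSetoid r
  left_inv P := part_injective <| funext fun a ↦ Finset.ext fun b ↦ by
    rw [mem_part_ofSetoid_iff_rel, Setoid.ker_def, eq_comm,
      ← P.mem_part_iff_part_eq_part (mem_univ b) (mem_univ a)]
  right_inv r := Setoid.ext fun a b ↦ by
    rw [Setoid.ker_def, ← (ofSetoid r).mem_part_iff_part_eq_part (mem_univ a) (mem_univ b),
      mem_part_ofSetoid_iff_rel, r.comm']

end Finpartition

theorem sameBlock_iff_equivSetoid {n : ℕ} (P : Finpartition (univ : Finset (Fin n)))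
    (i j : Fin n) : SameBlock P i j ↔ Finpartition.equivSetoid P i j := by
  rw [SameBlock, ← Finpartition.mem_part_iff_exists,
    P.mem_part_iff_part_eq_part (mem_univ i) (mem_univ j)]
  rfl

theorem isNoncrossing_iff_equivSetoid {n : ℕ} (P : Finpartition (univ : Finset (Fin n))) :
    IsNoncrossing P ↔ (Finpartition.equivSetoid P).IsNoncrossing := by
  simp only [IsNoncrossing, Setoid.IsNoncrossing, sameBlock_iff_equivSetoid, not_exists,
    not_and, not_not]

/-- The number of noncrossing partitions of `{1,…,n}` is the Catalan number `C_n`. -/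
theorem stmt6 (n : ℕ) :
    Nat.card {P : Finpartition (univ : Finset (Fin n)) // IsNoncrossing P} = catalan n := by
  rw [← Setoid.card_isNoncrossing n]
  exact Nat.card_congr (Finpartition.equivSetoid.subtypeEquiv isNoncrossing_iff_equivSetoid)
end

section
/- The Kreweras complementation map K : NC_n → NC_n is an order anti-automorphism of the lattice of noncrossing partitions; in particular, π ≤ σ implies K(σ) ≤ K(π), K is bijective, K(0̂_n) = 1̂_n, and K(1̂_n) = 0̂_n. -/
/-- A symmetric relation on `{1,…,m}` is noncrossing if there are no `i < j < k < l`
with `R i k`, `R j l` and `¬ R i j`. -/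
def RelNoncrossing {m : ℕ} (R : Fin m → Fin m → Prop) : Prop :=
  ¬ ∃ i j k l : Fin m, i < j ∧ j < k ∧ k < l ∧ R i k ∧ R j l ∧ ¬ R i j

/-- A set partition of `{1,…,n}`, viewed as an equivalence relation, is noncrossing. -/
def SetoidNC {n : ℕ} (s : Setoid (Fin n)) : Prop :=
  RelNoncrossing fun i j => s.r i j

/-- `⌊·/2⌋ : {1,…,2n} → {1,…,n}`. -/
def half {n : ℕ} (x : Fin (2 * n)) : Fin n :=
  ⟨x.val / 2, by have := x.isLt; omega⟩

/-- The interweaved union `π ∪̃ σ` of two partitions of `{1,…,n}`, as a relation on the `2n`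
interleaved points `1, 1̄, 2, 2̄, …, n, n̄` (even positions carry `π`, odd positions carry `σ`). -/
def interleaveRel {n : ℕ} (π σ : Setoid (Fin n)) (x y : Fin (2 * n)) : Prop :=
  (x.val % 2 = 0 ∧ y.val % 2 = 0 ∧ π.r (half x) (half y)) ∨
  (x.val % 2 = 1 ∧ y.val % 2 = 1 ∧ σ.r (half x) (half y))

/-- The Kreweras complement of `π`: the coarsest partition `σ` such that the interweaved
union `π ∪̃ σ` is noncrossing. -/
def kreweras {n : ℕ} (π : Setoid (Fin n)) : Setoid (Fin n) :=
  sSup {σ : Setoid (Fin n) | RelNoncrossing (interleaveRel π σ)}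

/-!
For noncrossing `π` the Kreweras complement is explicit: reading `b` as the gap `b̄`, two gaps lie
in the same block of `K(π)` iff no block of `π` separates them on the circle. Any `σ` whose
interweaving with `π` is noncrossing is finer than this partition, and this partition is itself
compatible, so it is the supremum defining `K(π)`. The description makes `K` visibly
order-reversing with `K(0̂) = 1̂` and `K(1̂) = 0̂`. Conversely a chord `{b, d}` lies in a block
of `π` iff no block of `K(π)` separates it, so `K` is injective on `NC_n`, hence bijective since
`NC_n` is finite.
-/

instance Setoid.instFinite {α : Type*} [Finite α] : Finite (Setoid α) :=
  Finite.of_injective (fun s : Setoid α => ⇑s) fun _ _ h => Setoid.ext (by simp [h])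

namespace Kreweras

variable {n : ℕ}

/-- The gaps `b̄` and `d̄` lie on the same side of the chord `{a, c}`: the gap `b̄` is inside the
chord exactly when one, but not both, of `a ≤ b` and `c ≤ b` holds. -/
def SameSide (a c b d : Fin n) : Prop :=
  ((a ≤ b ↔ c ≤ b) ↔ (a ≤ d ↔ c ≤ d))

lemma SameSide.swap_chord {a c b d : Fin n} (h : SameSide a c b d) : SameSide c a b d := by
  unfold SameSide at *; tauto

lemma SameSide.swap_gaps {a c b d : Fin n} (h : SameSide a c b d) : SameSide a c d b := by
  unfold SameSide at *; tauto

def gapSetoid (π : Setoid (Fin n)) : Setoid (Fin n) where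
  r b d := ∀ a c, π a c → SameSide a c b d
  iseqv :=
    { refl := fun _ _ _ _ => Iff.rfl
      symm := fun h a c hac => (h a c hac).symm
      trans := fun h₁ h₂ a c hac => (h₁ a c hac).trans (h₂ a c hac) }

@[simp] lemma gapSetoid_apply {π : Setoid (Fin n)} {b d : Fin n} :
    gapSetoid π b d ↔ ∀ a c, π a c → SameSide a c b d := Iff.rfl

lemma gapSetoid_anti {π σ : Setoid (Fin n)} (h : π ≤ σ) : gapSetoid σ ≤ gapSetoid π :=
  fun _ _ hbd a c hac => hbd a c (h hac)

lemma gapSetoid_noncrossing (π : Setoid (Fin n)) : SetoidNC (gapSetoid π) := by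
  rintro ⟨b₁, b₂, b₃, b₄, h₁₂, h₂₃, h₃₄, r₁₃, r₂₄, n₁₂⟩
  simp only [gapSetoid_apply, not_forall] at n₁₂
  obtain ⟨a, c, hac, hsep⟩ := n₁₂
  have t₁₃ := r₁₃ a c hac
  have t₂₄ := r₂₄ a c hac
  unfold SameSide at t₁₃ t₂₄ hsep
  omega

def point (a : Fin n) : Fin (2 * n) := ⟨2 * a.val, by omega⟩

def gap (a : Fin n) : Fin (2 * n) := ⟨2 * a.val + 1, by omega⟩

lemma point_lt_gap {a b : Fin n} : point a < gap b ↔ a ≤ b := by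
  simp only [point, gap, Fin.lt_def, Fin.le_def]; omega

lemma gap_lt_point {a b : Fin n} : gap a < point b ↔ a < b := by
  simp only [point, gap, Fin.lt_def]; omega

@[simp] lemma half_point (a : Fin n) : half (point a) = a := by
  ext; simp only [half, point]; omega

@[simp] lemma half_gap (a : Fin n) : half (gap a) = a := by
  ext; simp only [half, gap]; omega

section interleave

variable (π σ : Setoid (Fin n)) (a c : Fin n)

lemma interleaveRel_point_point : interleaveRel π σ (point a) (point c) ↔ π a c := by
  simp only [interleaveRel, half_point]; simp [point]

lemma interleaveRel_gap_gap : interleaveRel π σ (gap a) (gap c) ↔ σ a c := by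
  simp only [interleaveRel, half_gap]; simp [gap]

lemma not_interleaveRel_point_gap : ¬ interleaveRel π σ (point a) (gap c) := by
  simp [interleaveRel, point, gap]

lemma not_interleaveRel_gap_point : ¬ interleaveRel π σ (gap a) (point c) := by
  simp [interleaveRel, point, gap]

end interleave

lemma sameSide_of_noncrossing_interleave {π σ : Setoid (Fin n)}
    (h : RelNoncrossing (interleaveRel π σ)) {a c b d : Fin n} (hac : π a c) (hbd : σ b d) :
    SameSide a c b d := by
  have ordered : ∀ {a c b d}, π a c → σ b d → a ≤ c → b ≤ d → SameSide a c b d := by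
    intro a c b d hac hbd hac_le hbd_le
    by_contra hsep
    have hcross : (a ≤ b ∧ b < c ∧ c ≤ d) ∨ (b < a ∧ a ≤ d ∧ d < c) := by
      unfold SameSide at hsep; omega
    rcases hcross with ⟨h₁, h₂, h₃⟩ | ⟨h₁, h₂, h₃⟩
    · exact h ⟨point a, gap b, point c, gap d, point_lt_gap.2 h₁, gap_lt_point.2 h₂,
        point_lt_gap.2 h₃, (interleaveRel_point_point π σ a c).2 hac,
        (interleaveRel_gap_gap π σ b d).2 hbd, not_interleaveRel_point_gap π σ a b⟩
    · exact h ⟨gap b, point a, gap d, point c, gap_lt_point.2 h₁, point_lt_gap.2 h₂,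
        gap_lt_point.2 h₃, (interleaveRel_gap_gap π σ b d).2 hbd,
        (interleaveRel_point_point π σ a c).2 hac, not_interleaveRel_gap_point π σ b a⟩
  rcases le_total a c with hac_le | hca_le <;> rcases le_total b d with hbd_le | hdb_le
  · exact ordered hac hbd hac_le hbd_le
  · exact (ordered hac (σ.symm' hbd) hac_le hdb_le).swap_gaps
  · exact (ordered (π.symm' hac) hbd hca_le hbd_le).swap_chord
  · exact (ordered (π.symm' hac) (σ.symm' hbd) hca_le hdb_le).swap_chord.swap_gaps

lemma le_gapSetoid_of_noncrossing_interleave {π σ : Setoid (Fin n)}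
    (h : RelNoncrossing (interleaveRel π σ)) : σ ≤ gapSetoid π :=
  fun _ _ hbd _ _ hac => sameSide_of_noncrossing_interleave h hac hbd

lemma noncrossing_interleave_gapSetoid {π : Setoid (Fin n)} (hπ : SetoidNC π) :
    RelNoncrossing (interleaveRel π (gapSetoid π)) := by
  rintro ⟨i, j, k, l, hij, hjk, hkl, hik, hjl, hij'⟩
  have vi : (half i).val = i.val / 2 := rfl
  have vj : (half j).val = j.val / 2 := rfl
  have vk : (half k).val = k.val / 2 := rfl
  have vl : (half l).val = l.val / 2 := rfl
  rcases hik with ⟨pi, pk, hik⟩ | ⟨pi, pk, hik⟩ <;> rcases hjl with ⟨pj, pl, hjl⟩ | ⟨pj, pl, hjl⟩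
  · exact hπ ⟨half i, half j, half k, half l, by omega, by omega, by omega, hik, hjl,
      fun h => hij' (Or.inl ⟨pi, pj, h⟩)⟩
  · have := hjl _ _ hik
    unfold SameSide at this; omega
  · have := hik _ _ hjl
    unfold SameSide at this; omega
  · exact gapSetoid_noncrossing π ⟨half i, half j, half k, half l, by omega, by omega, by omega,
      hik, hjl, fun h => hij' (Or.inr ⟨pi, pj, h⟩)⟩

theorem kreweras_eq_gapSetoid {π : Setoid (Fin n)} (hπ : SetoidNC π) :
    kreweras π = gapSetoid π :=
  le_antisymm (sSup_le fun _ hσ => le_gapSetoid_of_noncrossing_interleave hσ)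
    (le_sSup (noncrossing_interleave_gapSetoid hπ))

lemma gapSetoid_rel_of_saturated {π : Setoid (Fin n)} {x y : Fin n} (hxy : x ≤ y)
    (hsat : ∀ p q, π p q → (x < p ∧ p ≤ y ↔ x < q ∧ q ≤ y)) : gapSetoid π x y :=
  fun a c hac => by have := hsat a c hac; unfold SameSide; omega

lemma exists_saturated_span {π : Setoid (Fin n)} (hπ : SetoidNC π) (t : Fin n) :
    ∃ f g, π f t ∧ π g t ∧ f ≤ t ∧ t ≤ g ∧
      ∀ p q, π p q → (f ≤ p ∧ p ≤ g ↔ f ≤ q ∧ q ≤ g) := by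
  classical
  have hne : (Finset.univ.filter (π · t)).Nonempty := ⟨t, by simp⟩
  obtain ⟨f, hf, hmin⟩ := (Finset.univ.filter (π · t)).exists_min_image id hne
  obtain ⟨g, hg, hmax⟩ := (Finset.univ.filter (π · t)).exists_max_image id hne
  simp only [Finset.mem_filter, Finset.mem_univ, true_and, id] at hf hg hmin hmax
  refine ⟨f, g, hf, hg, hmin t (π.refl' t), hmax t (π.refl' t), ?_⟩
  suffices H : ∀ p q, π p q → f ≤ p ∧ p ≤ g → f ≤ q ∧ q ≤ g from
    fun p q hpq => ⟨H p q hpq, H q p (π.symm' hpq)⟩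
  rintro p q hpq ⟨hfp, hpg⟩
  by_cases hpt : π p t
  · have hqt : π q t := π.trans' (π.symm' hpq) hpt
    exact ⟨hmin q hqt, hmax q hqt⟩
  have hfp' : f < p := lt_of_le_of_ne hfp fun h => hpt (h ▸ hf)
  have hpg' : p < g := lt_of_le_of_ne hpg fun h => hpt (h ▸ hg)
  have hfg : π f g := π.trans' hf (π.symm' hg)
  by_contra hq
  rcases not_and_or.mp hq with hqf | hgq
  · exact hπ ⟨q, f, p, g, not_le.mp hqf, hfp', hpg', π.symm' hpq, hfg,
      fun hqf' => hqf (hmin q (π.trans' hqf' hf))⟩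
  · exact hπ ⟨f, p, g, q, hfp', hpg', not_le.mp hgq, hfg, hpq,
      fun hfp'' => hpt (π.trans' (π.symm' hfp'') hf)⟩

/-- The gap just before the span of the block of `d` and the gap at its end are related in
`gapSetoid π`, and likewise for `b` (the gap before `0` being the last one, `n - 1`); testing
`SameSide b d` against these pairs puts `b` and `d` in the same block. -/
lemma rel_of_forall_sameSide {π : Setoid (Fin n)} (hπ : SetoidNC π) {b d : Fin n} (hbd : b < d)
    (h : ∀ x y, gapSetoid π x y → SameSide b d x y) : π b d := by
  obtain ⟨fB, gB, -, hgB, hfBb, hbgB, satB⟩ := exists_saturated_span hπ b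
  obtain ⟨fD, gD, hfD, -, hfDd, hdgD, satD⟩ := exists_saturated_span hπ d
  have hfD_le : fD ≤ b := by
    by_contra! hlt
    obtain ⟨x, hx⟩ : ∃ x : Fin n, x.val + 1 = fD.val := ⟨⟨fD.val - 1, by omega⟩, by simp; omega⟩
    have := h x gD <| gapSetoid_rel_of_saturated (by omega) fun p q hpq => by
      have := satD p q hpq; omega
    unfold SameSide at this; omega
  have hd_le : d ≤ gB := by
    by_contra! hlt
    by_cases hfB : fB.val = 0
    · obtain ⟨y, hy⟩ : ∃ y : Fin n, y.val + 1 = n := ⟨⟨n - 1, by omega⟩, by simp; omega⟩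
      have := h gB y <| gapSetoid_rel_of_saturated (by omega) fun p q hpq => by
        have := satB p q hpq; omega
      unfold SameSide at this; omega
    · obtain ⟨x, hx⟩ : ∃ x : Fin n, x.val + 1 = fB.val := ⟨⟨fB.val - 1, by omega⟩, by simp; omega⟩
      have := h x gB <| gapSetoid_rel_of_saturated (by omega) fun p q hpq => by
        have := satB p q hpq; omega
      unfold SameSide at this; omega
  rcases hfD_le.eq_or_lt with rfl | hfDb
  · exact hfD
  rcases hd_le.eq_or_lt with rfl | hdgB
  · exact π.symm' hgB
  have hfDb' : π fD b := by_contra fun hn => hπ ⟨fD, b, d, gB, hfDb, hbd, hdgB, hfD, π.symm' hgB, hn⟩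
  exact π.trans' (π.symm' hfDb') hfD

lemma rel_iff_forall_sameSide {π : Setoid (Fin n)} (hπ : SetoidNC π) {b d : Fin n} :
    π b d ↔ ∀ x y, gapSetoid π x y → SameSide b d x y := by
  refine ⟨fun hbd x y hxy => hxy b d hbd, fun h => ?_⟩
  rcases lt_trichotomy b d with hbd | rfl | hdb
  · exact rel_of_forall_sameSide hπ hbd h
  · exact π.refl' b
  · exact π.symm' (rel_of_forall_sameSide hπ hdb fun x y hxy => (h x y hxy).swap_chord)

lemma gapSetoid_injOn : Set.InjOn (gapSetoid (n := n)) {π | SetoidNC π} :=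
  fun π hπ σ hσ h => Setoid.ext fun b d => by
    rw [rel_iff_forall_sameSide hπ, rel_iff_forall_sameSide hσ, h]

lemma noncrossing_bot : SetoidNC (⊥ : Setoid (Fin n)) := by
  rintro ⟨i, j, k, -, hij, hjk, -, hik : i = k, -⟩
  exact (hik ▸ hij.trans hjk).false

lemma noncrossing_top : SetoidNC (⊤ : Setoid (Fin n)) :=
  fun ⟨_, _, _, _, _, _, _, _, _, hij⟩ => hij trivial

lemma gapSetoid_bot : gapSetoid (⊥ : Setoid (Fin n)) = ⊤ :=
  eq_top_iff.2 fun _ _ _ a _ (hac : a = _) => by subst hac; simp [SameSide]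

lemma gapSetoid_top : gapSetoid (⊤ : Setoid (Fin n)) = ⊥ := by
  refine eq_bot_iff.2 fun x y hxy => ?_
  have := hxy x y trivial
  show x = y
  unfold SameSide at this; omega

end Kreweras

/-- The Kreweras complementation map is an order anti-automorphism of `NC_n`:
it is order-reversing, a bijection of `NC_n` onto itself, and maps `0̂_n` to `1̂_n`
and `1̂_n` to `0̂_n`. -/
theorem stmt7 (n : ℕ) :
    (∀ π σ : Setoid (Fin n), SetoidNC π → SetoidNC σ → π ≤ σ →
        kreweras σ ≤ kreweras π) ∧
    Set.BijOn (kreweras (n := n)) {π | SetoidNC π} {π | SetoidNC π} ∧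
    kreweras (⊥ : Setoid (Fin n)) = ⊤ ∧
    kreweras (⊤ : Setoid (Fin n)) = ⊥ := by
  have hK : Set.EqOn (kreweras (n := n)) Kreweras.gapSetoid {π | SetoidNC π} :=
    fun _ hπ => Kreweras.kreweras_eq_gapSetoid hπ
  have hmaps : Set.MapsTo (kreweras (n := n)) {π | SetoidNC π} {π | SetoidNC π} :=
    fun π hπ => (hK hπ).symm ▸ Kreweras.gapSetoid_noncrossing π
  refine ⟨fun π σ hπ hσ hle => ?_, ?_, ?_, ?_⟩
  · rw [hK hπ, hK hσ]
    exact Kreweras.gapSetoid_anti hle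
  · exact (Set.toFinite _).injOn_iff_bijOn_of_mapsTo hmaps |>.mp
      (hK.injOn_iff.mpr Kreweras.gapSetoid_injOn)
  · rw [hK Kreweras.noncrossing_bot, Kreweras.gapSetoid_bot]
  · rw [hK Kreweras.noncrossing_top, Kreweras.gapSetoid_top]
end

section
/- Let π be a set partition of {1,...,n} with cn(π) = #{k : 1 ≤ k ≤ n-1, k ~_π k+1} > 0, and pick k with k ~_π k+1. Let π̂ = π/[k = k+1] ∈ Π_{n-1} be the partition obtained by merging positions k and k+1, and let ν be the partition of {1,...,n} whose only non-singleton block is {k, k+1}. Then every partition ρ of {1,...,n} with ρ ∨ ν = π and ρ < π satisfies cn(ρ) ≤ cn(π) - 1, and cn(π̂) = cn(π) - 1. -/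
open scoped Classical

/-- The number of connected neighbours of a partition of `{1,…,m+1}`: the number of
adjacent pairs `k, k+1` lying in the same block. -/
noncomputable def cn {m : ℕ} (s : Setoid (Fin (m + 1))) : ℕ :=
  (Finset.univ.filter fun j : Fin m => s.r j.castSucc j.succ).card

/-!
Counting the connected neighbours of `π` at the pair `(k, k+1)` separately from the others, the
others are indexed by `k.succAbove`. A `ρ < π` with `ρ ∨ ν = π` cannot join `k` and `k+1` (else
`ν ≤ ρ` and `ρ = π`), and each of its other connected pairs is connected in `π`. The quotient
`π/[k = k+1]` is the pullback of `π` along the embedding `k.succ.succAbove` that skips `k+1`; its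
adjacent pairs match those of `π` other than `(k, k+1)`, the pair `(k, k+2)` across the gap being
joined exactly when `(k+1, k+2)` is, since `k ∼_π k+1`.
-/

open Finset

theorem Fin.card_filter_univ_succAbove {n : ℕ} (p : Fin (n + 1) → Prop) [DecidablePred p]
    (k : Fin (n + 1)) : #{x | p x} = ite (p k) 1 0 + #{x | p (k.succAbove x)} := by
  rw [card_filter, Fin.sum_univ_succAbove _ k, card_filter]

theorem Fin.succ_succAbove_castSucc_of_ne {n : ℕ} {k : Fin (n + 1)} {j : Fin n}
    (h : j.castSucc ≠ k) : k.succ.succAbove j.castSucc = (k.succAbove j).castSucc := by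
  rcases lt_or_gt_of_ne h with h | h
  · rw [Fin.succAbove_of_castSucc_lt _ _ h, Fin.succAbove_succ_of_le _ _ h.le]
  · rw [Fin.succAbove_of_le_castSucc _ _ h.le, Fin.succAbove_succ_of_lt _ _ h, Fin.succ_castSucc]

theorem Fin.succAbove_succ_eq_ite {n : ℕ} (k : Fin (n + 1)) :
    k.succ.succAbove = fun a => if a ≤ k then a.castSucc else a.succ := by
  funext a
  simp only [Fin.succAbove, Fin.castSucc_lt_succ_iff]

theorem Setoid.not_rel_of_sup_eq_of_lt {α : Type*} {ρ π : Setoid α} {a b : α}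
    (hsup : ρ ⊔ sInf {s : Setoid α | s.r a b} = π) (hlt : ρ < π) : ¬ ρ.r a b := fun h =>
  hlt.ne (hsup ▸ (sup_eq_left.2 (sInf_le (α := Setoid α) h)).symm)

theorem cn_eq_ite_add {n : ℕ} (s : Setoid (Fin (n + 2))) (k : Fin (n + 1)) :
    cn s = ite (s.r k.castSucc k.succ) 1 0 +
      #{j : Fin n | s.r (k.succAbove j).castSucc (k.succAbove j).succ} :=
  Fin.card_filter_univ_succAbove _ k

theorem cn_le_cn_sub_one {n : ℕ} {ρ π : Setoid (Fin (n + 2))} {k : Fin (n + 1)} (hle : ρ ≤ π)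
    (hk : π.r k.castSucc k.succ) (hρk : ¬ ρ.r k.castSucc k.succ) : cn ρ ≤ cn π - 1 := by
  rw [cn_eq_ite_add ρ k, cn_eq_ite_add π k, if_neg hρk, if_pos hk, zero_add,
    Nat.add_sub_cancel_left]
  exact card_le_card (monotone_filter_right _ fun _ _ => @hle _ _)

theorem comap_succAbove_succ_rel_iff {n : ℕ} {π : Setoid (Fin (n + 2))} {k : Fin (n + 1)}
    (hk : π.r k.castSucc k.succ) (j : Fin n) :
    (π.comap k.succ.succAbove).r j.castSucc j.succ ↔
      π.r (k.succAbove j).castSucc (k.succAbove j).succ := by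
  rw [Setoid.comap_rel, Fin.succ_succAbove_succ]
  by_cases hj : j.castSucc = k
  · subst hj
    rw [Fin.succAbove_succ_self, Fin.succAbove_castSucc_self, ← Fin.succ_castSucc]
    exact ⟨π.iseqv.trans (π.iseqv.symm hk), π.iseqv.trans hk⟩
  · rw [Fin.succ_succAbove_castSucc_of_ne hj]

theorem cn_comap_succAbove_succ {n : ℕ} {π : Setoid (Fin (n + 2))} {k : Fin (n + 1)}
    (hk : π.r k.castSucc k.succ) : cn (π.comap k.succ.succAbove) = cn π - 1 := by
  rw [cn_eq_ite_add π k, if_pos hk, Nat.add_sub_cancel_left]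
  exact congrArg card (filter_congr fun j _ => comap_succAbove_succ_rel_iff hk j)

/-- Splitting a connected pair of neighbours: if `k ∼_π k+1`, then every `ρ` with
`ρ ∨ ν = π` and `ρ < π` (where `ν` is the partition generated by identifying `k` and `k+1`)
satisfies `cn(ρ) ≤ cn(π) − 1`; and the quotient `π̂ = π/[k = k+1] ∈ Π_{n-1}` satisfies
`cn(π̂) = cn(π) − 1`. -/
theorem stmt17 (n : ℕ) (π : Setoid (Fin (n + 2))) (k : Fin (n + 1))
    (hk : π.r k.castSucc k.succ) :
    (∀ ρ : Setoid (Fin (n + 2)),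
      ρ ⊔ sInf {s : Setoid (Fin (n + 2)) | s.r k.castSucc k.succ} = π → ρ < π →
        cn ρ ≤ cn π - 1) ∧
    cn (Setoid.comap
        (fun a : Fin (n + 1) => if a ≤ k then a.castSucc else a.succ) π) = cn π - 1 := by
  refine ⟨fun ρ hsup hlt => ?_, ?_⟩
  · exact cn_le_cn_sub_one (hsup ▸ le_sup_left) hk (Setoid.not_rel_of_sup_eq_of_lt hsup hlt)
  · rw [← Fin.succAbove_succ_eq_ite]
    exact cn_comap_succAbove_succ hk
end

section
/- In a *-probability space (U, φ) with an exchangeability structure, the sesquilinear form ⟨X, Y⟩ = φ(Y^{(1)*} X^{(2)}) on A is positive semidefinite; consequently the Cauchy–Schwarz inequality |φ(Y^{(1)*} X^{(2)})|² ≤ φ(X^{(1)*} X^{(2)}) · φ(Y^{(1)*} Y^{(2)}) holds for all X, Y ∈ A. -/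
/-!
For the average `ψ_N = N⁻¹ ∑_{j<N} X^{(j)}` of `N` exchangeable copies of `X`, exchangeability
reduces `φ(ψ_N^* ψ_N)` to one diagonal and one off-diagonal moment,
`φ(ψ_N^* ψ_N) = N⁻¹ φ(X^{(1)*} X^{(1)}) + (1 - N⁻¹) φ(X^{(1)*} X^{(2)})`.
The left side is `≥ 0`, so its limit `φ(X^{(1)*} X^{(2)})` is `≥ 0`. A positive functional is
Hermitian, so `⟨X, Y⟩ = φ(X^{(1)*} Y^{(2)})` is a positive semidefinite Hermitian form on `A`,
and Cauchy–Schwarz applies to it.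
-/

open Finset Filter Topology ComplexConjugate ComplexOrder

theorem Equiv.Perm.exists_apply_eq_and_apply_eq {α : Type*} [DecidableEq α] {i j k l : α}
    (hij : i ≠ j) (hkl : k ≠ l) : ∃ σ : Perm α, σ i = k ∧ σ j = l := by
  have hk : k ≠ swap i k j := by simpa using (swap i k).injective.ne hij
  exact ⟨(swap i k).trans (swap (swap i k j) l), by simp [swap_apply_of_ne_of_ne hk hkl],
    by simp⟩

theorem LinearMap.map_star_mul_eq_conj {U : Type*} [Ring U] [Algebra ℂ U] [StarRing U]
    [StarModule ℂ U] {φ : U →ₗ[ℂ] ℂ} (hφ : ∀ u : U, (φ (star u * u)).im = 0) (u v : U) :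
    φ (star v * u) = conj (φ (star u * v)) := by
  have hsum := hφ (u + v)
  have hrot := hφ (u + Complex.I • v)
  simp only [star_add, star_smul, add_mul, mul_add, smul_mul_assoc, mul_smul_comm,
    map_add, map_smul, Complex.star_def, Complex.conj_I, Complex.add_im, smul_eq_mul,
    Complex.mul_im, Complex.mul_re, Complex.I_re, Complex.I_im, Complex.neg_re, Complex.neg_im,
    hφ] at hsum hrot
  apply Complex.ext <;> simp only [Complex.conj_re, Complex.conj_im] <;> linarith

section Exchangeable

variable {A U : Type*} [Ring A] [Algebra ℂ A] [StarRing A] [Ring U] [Algebra ℂ U] [StarRing U]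

def IsExchangeable (φ : U →ₗ[ℂ] ℂ) (ι : ℕ → A →⋆ₐ[ℂ] U) : Prop :=
  ∀ (m : ℕ) (X : Fin m → A) (h : Fin m → ℕ) (σ : Equiv.Perm ℕ),
    φ (List.ofFn fun i => ι (h i) (X i)).prod = φ (List.ofFn fun i => ι (σ (h i)) (X i)).prod

noncomputable def copyAverage (ι : ℕ → A →⋆ₐ[ℂ] U) (X : A) (N : ℕ) : U :=
  (N : ℂ)⁻¹ • ∑ j ∈ range N, ι j X

variable {φ : U →ₗ[ℂ] ℂ} {ι : ℕ → A →⋆ₐ[ℂ] U}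

namespace IsExchangeable

theorem map_mul_perm (hφ : IsExchangeable φ ι) (σ : Equiv.Perm ℕ) (i j : ℕ) (x y : A) :
    φ (ι (σ i) x * ι (σ j) y) = φ (ι i x * ι j y) := by
  simpa [List.ofFn_succ] using (hφ 2 ![x, y] ![i, j] σ).symm

theorem map_mul_of_ne (hφ : IsExchangeable φ ι) {i j : ℕ} (hij : i ≠ j) (x y : A) :
    φ (ι i x * ι j y) = φ (ι 0 x * ι 1 y) := by
  obtain ⟨σ, hi, hj⟩ := Equiv.Perm.exists_apply_eq_and_apply_eq hij zero_ne_one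
  rw [← hφ.map_mul_perm σ, hi, hj]

theorem map_mul_of_eq (hφ : IsExchangeable φ ι) (i : ℕ) (x y : A) :
    φ (ι i x * ι i y) = φ (ι 0 x * ι 0 y) := by
  rw [← hφ.map_mul_perm (Equiv.swap i 0), Equiv.swap_apply_left]

theorem map_star_sum_mul_sum (hφ : IsExchangeable φ ι) (X : A) (N : ℕ) :
    φ (star (∑ j ∈ range N, ι j X) * ∑ j ∈ range N, ι j X) =
      N * (φ (ι 0 (star X) * ι 0 X) + (N - 1) * φ (ι 0 (star X) * ι 1 X)) := by
  have row : ∀ i ∈ range N, ∑ j ∈ range N, φ (ι i (star X) * ι j X) =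
      φ (ι 0 (star X) * ι 0 X) + (N - 1) * φ (ι 0 (star X) * ι 1 X) := by
    intro i hi
    rw [← add_sum_erase _ _ hi, hφ.map_mul_of_eq,
      sum_congr rfl fun j hj => hφ.map_mul_of_ne (ne_of_mem_erase hj).symm _ _, sum_const,
      card_erase_of_mem hi, card_range, nsmul_eq_mul,
      Nat.cast_pred (Nat.zero_lt_of_lt (mem_range.mp hi))]
  simp only [star_sum, ← map_star, sum_mul_sum, map_sum]
  rw [sum_congr rfl row, sum_const, card_range, nsmul_eq_mul]

theorem map_star_copyAverage_mul_copyAverage [StarModule ℂ U]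
    (hφ : IsExchangeable φ ι) (X : A) {N : ℕ} (hN : N ≠ 0) :
    φ (star (copyAverage ι X N) * copyAverage ι X N) =
      (N : ℂ)⁻¹ * φ (ι 0 (star X) * ι 0 X) + (1 - (N : ℂ)⁻¹) * φ (ι 0 (star X) * ι 1 X) := by
  rw [copyAverage, star_smul, smul_mul_smul_comm, map_smul, hφ.map_star_sum_mul_sum, smul_eq_mul,
    Complex.star_def, map_inv₀, Complex.conj_natCast]
  field_simp

theorem map_star_mul_nonneg [StarModule ℂ U] (hφ : IsExchangeable φ ι)
    (hpos : ∀ u : U, 0 ≤ φ (star u * u)) (X : A) : 0 ≤ φ (star (ι 0 X) * ι 1 X) := by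
  set a := φ (ι 0 (star X) * ι 0 X)
  set b := φ (ι 0 (star X) * ι 1 X)
  have hinv := tendsto_inv_atTop_nhds_zero_nat (𝕜 := ℂ)
  have hlim : Tendsto (fun N : ℕ => (N : ℂ)⁻¹ * a + (1 - (N : ℂ)⁻¹) * b) atTop (𝓝 b) := by
    simpa using
      (hinv.mul_const a).add (((tendsto_const_nhds (x := (1 : ℂ))).sub hinv).mul_const b)
  have hmoment : ∀ᶠ N : ℕ in atTop, (N : ℂ)⁻¹ * a + (1 - (N : ℂ)⁻¹) * b =
      φ (star (copyAverage ι X N) * copyAverage ι X N) := by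
    filter_upwards [eventually_ne_atTop 0] with N hN
    exact (hφ.map_star_copyAverage_mul_copyAverage X hN).symm
  rw [← map_star]
  exact ge_of_tendsto' (hlim.congr' hmoment) fun N => hpos _

noncomputable abbrev preInnerProductCore [StarModule ℂ U] (hφ : IsExchangeable φ ι)
    (hpos : ∀ u : U, 0 ≤ φ (star u * u)) : PreInnerProductSpace.Core ℂ A where
  inner x y := φ (star (ι 0 x) * ι 1 y)
  conj_inner_symm x y := by
    rw [← φ.map_star_mul_eq_conj (fun u => (Complex.nonneg_iff.mp (hpos u)).2.symm),
      ← map_star, ← map_star, hφ.map_mul_of_ne one_ne_zero]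
  re_inner_nonneg x := (Complex.nonneg_iff.mp (hφ.map_star_mul_nonneg hpos x)).1
  add_left x y z := by simp only [map_add, star_add, add_mul]
  smul_left x y r := by
    simp only [map_smul, star_smul, smul_mul_assoc, smul_eq_mul, Complex.star_def]

theorem norm_map_star_mul_sq_le [StarModule ℂ U] (hφ : IsExchangeable φ ι)
    (hpos : ∀ u : U, 0 ≤ φ (star u * u)) (X Y : A) :
    ‖φ (star (ι 0 Y) * ι 1 X)‖ ^ 2 ≤
      (φ (star (ι 0 X) * ι 1 X)).re * (φ (star (ι 0 Y) * ι 1 Y)).re := by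
  let := hφ.preInnerProductCore hpos
  have h := InnerProductSpace.Core.inner_mul_inner_self_le (𝕜 := ℂ) Y X
  rw [InnerProductSpace.Core.norm_inner_symm X Y, mul_comm (RCLike.re _)] at h
  rw [sq]
  exact h

end IsExchangeable

end Exchangeable

theorem stmt18_general
    (A U : Type*) [Ring A] [Algebra ℂ A] [StarRing A]
    [Ring U] [Algebra ℂ U] [StarRing U] [StarModule ℂ U]
    (φ : U →ₗ[ℂ] ℂ)
    (hpos : ∀ u : U, 0 ≤ (φ (star u * u)).re ∧ (φ (star u * u)).im = 0)
    (ι : ℕ → A →⋆ₐ[ℂ] U)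
    (hexch : ∀ (m : ℕ) (X : Fin m → A) (h : Fin m → ℕ) (σ : Equiv.Perm ℕ),
      φ (List.ofFn fun i => ι (h i) (X i)).prod =
        φ (List.ofFn fun i => ι (σ (h i)) (X i)).prod) :
    (∀ X : A,
      0 ≤ (φ (star (ι 0 X) * ι 1 X)).re ∧ (φ (star (ι 0 X) * ι 1 X)).im = 0) ∧
    (∀ X Y : A,
      ‖φ (star (ι 0 Y) * ι 1 X)‖ ^ 2 ≤
        (φ (star (ι 0 X) * ι 1 X)).re * (φ (star (ι 0 Y) * ι 1 Y)).re) := by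
  have hφ : IsExchangeable φ ι := hexch
  have hnonneg : ∀ u : U, 0 ≤ φ (star u * u) := fun u =>
    Complex.nonneg_iff.mpr ⟨(hpos u).1, (hpos u).2.symm⟩
  exact ⟨fun X => (Complex.nonneg_iff.mp (hφ.map_star_mul_nonneg hnonneg X)).imp_right Eq.symm,
    hφ.norm_map_star_mul_sq_le hnonneg⟩

/-- In an exchangeability system for a `*`-probability space `(A, φ)` — embeddings
`ι_k : A → U` into a `*`-probability space `(U, φ̃)` with permutation-invariant mixed
moments — the sesquilinear form `⟨X, Y⟩ = φ̃(Y^{(1)*} X^{(2)})` is positive semidefinite,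
and consequently the Cauchy–Schwarz inequality
`|φ̃(Y^{(1)*} X^{(2)})|² ≤ φ̃(X^{(1)*} X^{(2)}) · φ̃(Y^{(1)*} Y^{(2)})` holds. -/
theorem stmt18
    (A U : Type*) [Ring A] [Algebra ℂ A] [StarRing A] [StarModule ℂ A]
    [Ring U] [Algebra ℂ U] [StarRing U] [StarModule ℂ U]
    (φ : U →ₗ[ℂ] ℂ)
    (hpos : ∀ u : U, 0 ≤ (φ (star u * u)).re ∧ (φ (star u * u)).im = 0)
    (ι : ℕ → A →⋆ₐ[ℂ] U)
    (hexch : ∀ (m : ℕ) (X : Fin m → A) (h : Fin m → ℕ) (σ : Equiv.Perm ℕ),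
      φ (List.ofFn fun i => ι (h i) (X i)).prod =
        φ (List.ofFn fun i => ι (σ (h i)) (X i)).prod) :
    (∀ X : A,
      0 ≤ (φ (star (ι 0 X) * ι 1 X)).re ∧ (φ (star (ι 0 X) * ι 1 X)).im = 0) ∧
    (∀ X Y : A,
      ‖φ (star (ι 0 Y) * ι 1 X)‖ ^ 2 ≤
        (φ (star (ι 0 X) * ι 1 X)).re * (φ (star (ι 0 Y) * ι 1 Y)).re) :=
  stmt18_general A U φ hpos ι hexch
end
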